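/- Let n be the unary operation on the three truth values {t, f, ⊤} with n(t) = f, n(f) = t, n(⊤) = ⊤; let c be the binary operation with c(x, y) = f if x = f or y = f, c(t, t) = t, and c(t, ⊤) = c(⊤, t) = c(⊤, ⊤) = ⊤; and let d be the binary operation with d(f, f) = f, d(t, t) = d(t, f) = d(f, t) = d(t, ⊤) = d(⊤, t) = t, and d(⊤, ⊤) = d(⊤, f) = d(f, ⊤) = ⊤. Among the sixteen binary operations i on {t, f, ⊤} satisfying i(t, f) = i(⊤, f) = f, i(f, f) = i(f, t) = i(t, t) = t, and i(x, y) ∈ {t, ⊤} for (x, y) ∈ {(f, ⊤), (t, ⊤), (⊤, t), (⊤, ⊤)}, there is exactly one satisfying, for all x, y, z: i(d(x, n(x)), y) = y, c(i(x, y), i(x, z)) = i(x, c(y, z)), and c(i(x, z), i(y, z)) = i(d(x, y), z); namely the operation with i(f, y) = t for all y and i(x, y) = y for x ∈ {t, ⊤} (the implication of LP^{→,F}). -/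
import Mathlib


/-- The three truth values: true, false, both-true-and-false. -/
inductive TV : Type
  | t : TV
  | f : TV
  | b : TV
  deriving DecidableEq

/-- Formulas of LP^{→,F}: propositional variables, falsity constant,
    negation, conjunction, disjunction, implication. -/
inductive Fm : Type
  | var : ℕ → Fm
  | fls : Fm
  | neg : Fm → Fm
  | conj : Fm → Fm → Fm
  | disj : Fm → Fm → Fm
  | impl : Fm → Fm → Fm
  deriving DecidableEq

/-- The LP^{→,F} negation truth function. -/
def TV.negLP : TV → TV
  | .t => .f
  | .f => .t
  | .b => .b

/-- The LP^{→,F} conjunction truth function. -/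
def TV.andLP : TV → TV → TV
  | .f, _ => .f
  | _, .f => .f
  | .t, .t => .t
  | _, _ => .b

/-- The LP^{→,F} disjunction truth function. -/
def TV.orLP : TV → TV → TV
  | .t, _ => .t
  | _, .t => .t
  | .f, .f => .f
  | _, _ => .b

/-- The LP^{→,F} implication truth function: t if the antecedent is f,
    otherwise the value of the consequent. -/
def TV.implLP : TV → TV → TV
  | .f, _ => .t
  | _, y => y

/-- A valuation for LP^{→,F}. -/
def IsValuation (ν : Fm → TV) : Prop :=
  ν .fls = .f ∧
  (∀ A, ν (.neg A) = (ν A).negLP) ∧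
  (∀ A B, ν (.conj A B) = (ν A).andLP (ν B)) ∧
  (∀ A B, ν (.disj A B) = (ν A).orLP (ν B)) ∧
  (∀ A B, ν (.impl A B) = (ν A).implLP (ν B))

/-- Logical equivalence in LP^{→,F}. -/
def LEquiv (A B : Fm) : Prop := ∀ ν : Fm → TV, IsValuation ν → ν A = ν B

/-- The truth constant T, an abbreviation for ¬F. -/
def Fm.tru : Fm := .neg .fls

/-- A truth value is designated iff it is t or ⊤. -/
def Designated (v : TV) : Prop := v = .t ∨ v = .b

/-- Semantic logical consequence in LP^{→,F}. -/
def LPCons (Γ : Set Fm) (A : Fm) : Prop :=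
  ∀ ν : Fm → TV, IsValuation ν → ((∃ B ∈ Γ, ν B = .f) ∨ Designated (ν A))

/-- Validity in LP^{→,F}. -/
def LPValid (A : Fm) : Prop := ∀ ν : Fm → TV, IsValuation ν → Designated (ν A)

/-- Among the sixteen implication truth tables admitted by the AAZ
    non-deterministic truth table, exactly one satisfies (relative to the
    LP^{→,F} negation, conjunction and disjunction) the three identities
    corresponding to laws (10)–(12): the LP^{→,F} implication. -/
theorem unique_implication :
    ∀ i : TV → TV → TV,
      ((i .t .f = .f ∧ i .b .f = .f ∧
        i .f .f = .t ∧ i .f .t = .t ∧ i .t .t = .t ∧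
        (i .f .b = .t ∨ i .f .b = .b) ∧
        (i .t .b = .t ∨ i .t .b = .b) ∧
        (i .b .t = .t ∨ i .b .t = .b) ∧
        (i .b .b = .t ∨ i .b .b = .b)) ∧
       ((∀ x y, i (TV.orLP x (TV.negLP x)) y = y) ∧
        (∀ x y z, TV.andLP (i x y) (i x z) = i x (TV.andLP y z)) ∧
        (∀ x y z, TV.andLP (i x z) (i y z) = i (TV.orLP x y) z)))
      ↔ i = TV.implLP := by

  intro i
  constructor
  · rintro ⟨⟨htf, hbf, hff, hft, htt, hfb, _, _, _⟩, h1, h2, h3⟩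
    have ht : ∀ y, i .t y = y := fun y => by
      have := h1 .t y; simpa [TV.orLP, TV.negLP] using this
    have hb : ∀ y, i .b y = y := fun y => by
      have := h1 .b y; simpa [TV.orLP, TV.negLP] using this
    have hfb' : i .f .b = .t := by
      rcases hfb with h | h
      · exact h
      · exfalso
        have h2' := h2 .f .b .f
        rw [h, hff] at h2'
        simp only [TV.andLP] at h2'
        rw [hff] at h2'
        exact absurd h2' (by decide)
    funext x y
    cases x with
    | t => rw [ht]; cases y <;> rfl
    | b => rw [hb]; cases y <;> rfl
    | f => cases y with
      | t => exact hft
      | f => exact hff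
      | b => exact hfb'
  · rintro rfl
    refine ⟨by decide, ?_, ?_, ?_⟩ <;> intros x y <;> first
      | (intro z; cases x <;> cases y <;> cases z <;> rfl)
      | (cases x <;> cases y <;> rfl)
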